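/- Suppose (Φ, Γ) satisfy the pair of diffusion equations -μσ²∂ₜΦ = (μσ⁴/2)∂ₓₓΦ + V̄·Φ and μσ²∂ₜΓ = (μσ⁴/2)∂ₓₓΓ + V̄·Γ, with Φ > 0, where V̄(x,t) is a given smooth function. Then u := -μσ² log Φ and m := ΦΓ satisfy the HJB equation ∂ₜu - (1/(2μ))(∂ₓu)² + (σ²/2)∂ₓₓu = V̄ and the Fokker–Planck equation ∂ₜm - (1/μ)∂ₓ(m ∂ₓu) - (σ²/2)∂ₓₓm = 0. -/

import Mathlib

open Real

lemma contDiff_two_deriv_diff {f : ℝ → ℝ} (hf : ContDiff ℝ 2 f) :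
    Differentiable ℝ (deriv f) := by
  have := (contDiff_succ_iff_deriv.mp
    (show ContDiff ℝ (1+1) f by exact_mod_cast hf)).2.2
  exact this.differentiable one_ne_zero

/-- Inverse Cole–Hopf transformation: if (Φ, Γ) solve the pair of diffusion
equations, then u = -μσ² log Φ and m = ΦΓ solve the HJB and Fokker–Planck
equations of the quadratic MFG. -/
theorem cole_hopf_inverse (μ σ : ℝ) (hμ : 0 < μ) (hσ : 0 < σ)
    (Φ Γ V : ℝ → ℝ → ℝ)
    (hΦpos : ∀ x t, 0 < Φ x t)
    (hΦx : ∀ t, ContDiff ℝ 2 (fun x => Φ x t))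
    (hΦt : ∀ x, ContDiff ℝ 1 (fun t => Φ x t))
    (hΓx : ∀ t, ContDiff ℝ 2 (fun x => Γ x t))
    (hΓt : ∀ x, ContDiff ℝ 1 (fun t => Γ x t))
    (hV : ContDiff ℝ (⊤ : ℕ∞) (fun p : ℝ × ℝ => V p.1 p.2))
    (hΦ : ∀ x t, -(μ * σ ^ 2) * deriv (fun τ => Φ x τ) t =
        μ * σ ^ 4 / 2 * deriv (fun y => deriv (fun z => Φ z t) y) x + V x t * Φ x t)
    (hΓ : ∀ x t, μ * σ ^ 2 * deriv (fun τ => Γ x τ) t =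
        μ * σ ^ 4 / 2 * deriv (fun y => deriv (fun z => Γ z t) y) x + V x t * Γ x t) :
    (∀ x t,
        deriv (fun τ => -(μ * σ ^ 2) * Real.log (Φ x τ)) t
          - 1 / (2 * μ) * (deriv (fun y => -(μ * σ ^ 2) * Real.log (Φ y t)) x) ^ 2
          + σ ^ 2 / 2 *
            deriv (fun y => deriv (fun z => -(μ * σ ^ 2) * Real.log (Φ z t)) y) x
        = V x t) ∧
    (∀ x t,
        deriv (fun τ => Φ x τ * Γ x τ) t
          - 1 / μ * deriv (fun y => Φ y t * Γ y t *
              deriv (fun z => -(μ * σ ^ 2) * Real.log (Φ z t)) y) x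
          - σ ^ 2 / 2 * deriv (fun y => deriv (fun z => Φ z t * Γ z t) y) x
        = 0) := by
  have hfd : ∀ t, Differentiable ℝ (fun y => Φ y t) :=
    fun t => (hΦx t).differentiable (by norm_num)
  have hfd' : ∀ t, Differentiable ℝ (deriv (fun y => Φ y t)) :=
    fun t => contDiff_two_deriv_diff (hΦx t)
  have hgd : ∀ t, Differentiable ℝ (fun y => Γ y t) :=
    fun t => (hΓx t).differentiable (by norm_num)
  have hgd' : ∀ t, Differentiable ℝ (deriv (fun y => Γ y t)) :=
    fun t => contDiff_two_deriv_diff (hΓx t)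
  have hftd : ∀ x, Differentiable ℝ (fun τ => Φ x τ) :=
    fun x => (hΦt x).differentiable one_ne_zero
  have hgtd : ∀ x, Differentiable ℝ (fun τ => Γ x τ) :=
    fun x => (hΓt x).differentiable one_ne_zero
  have h0 : ∀ x t, Φ x t ≠ 0 := fun x t => (hΦpos x t).ne'
  -- first space derivative of u
  have e2 : ∀ t, (fun y => deriv (fun z => -(μ * σ ^ 2) * Real.log (Φ z t)) y)
      = fun y => -(μ * σ ^ 2) * (deriv (fun z => Φ z t) y / Φ y t) := by
    intro t; funext y
    exact (((hfd t y).hasDerivAt.log (h0 y t)).const_mul _).deriv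
  constructor
  · intro x t
    have e1 : deriv (fun τ => -(μ * σ ^ 2) * Real.log (Φ x τ)) t
        = -(μ * σ ^ 2) * (deriv (fun τ => Φ x τ) t / Φ x t) :=
      (((hftd x t).hasDerivAt.log (h0 x t)).const_mul _).deriv
    have e3 : deriv (fun y => deriv (fun z => -(μ * σ ^ 2) * Real.log (Φ z t)) y) x
        = -(μ * σ ^ 2) * ((deriv (deriv (fun z => Φ z t)) x * Φ x t
            - deriv (fun z => Φ z t) x * deriv (fun z => Φ z t) x) / Φ x t ^ 2) := by
      rw [e2 t]
      exact (((hfd' t x).hasDerivAt.div (hfd t x).hasDerivAt (h0 x t)).const_mul _).deriv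
    have e2x : deriv (fun y => -(μ * σ ^ 2) * Real.log (Φ y t)) x
        = -(μ * σ ^ 2) * (deriv (fun z => Φ z t) x / Φ x t) := congrFun (e2 t) x
    rw [e1, e3, e2x]
    have h := hΦ x t
    have hP := h0 x t
    have hμ' : μ ≠ 0 := hμ.ne'
    field_simp
    linear_combination (2 * Φ x t) * h
  · intro x t
    have hg := hgd t
    have t1 : deriv (fun τ => Φ x τ * Γ x τ) t
        = deriv (fun τ => Φ x τ) t * Γ x t + Φ x t * deriv (fun τ => Γ x τ) t :=
      deriv_mul (hftd x t) (hgtd x t)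
    have e4 : (fun y => Φ y t * Γ y t *
          deriv (fun z => -(μ * σ ^ 2) * Real.log (Φ z t)) y)
        = fun y => -(μ * σ ^ 2) * (Γ y t * deriv (fun z => Φ z t) y) := by
      funext y
      rw [congrFun (e2 t) y]
      field_simp [h0 y t]
    have t2 : deriv (fun y => -(μ * σ ^ 2) * (Γ y t * deriv (fun z => Φ z t) y)) x
        = -(μ * σ ^ 2) * (deriv (fun z => Γ z t) x * deriv (fun z => Φ z t) x
            + Γ x t * deriv (deriv (fun z => Φ z t)) x) :=
      (((hgd t x).hasDerivAt.mul (hfd' t x).hasDerivAt).const_mul _).deriv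
    have e5 : (fun y => deriv (fun z => Φ z t * Γ z t) y)
        = fun y => deriv (fun z => Φ z t) y * Γ y t + Φ y t * deriv (fun z => Γ z t) y := by
      funext y; exact deriv_mul (hfd t y) (hgd t y)
    have t3 : deriv (fun y => deriv (fun z => Φ z t * Γ z t) y) x
        = (deriv (deriv (fun z => Φ z t)) x * Γ x t
            + deriv (fun z => Φ z t) x * deriv (fun z => Γ z t) x)
          + (deriv (fun z => Φ z t) x * deriv (fun z => Γ z t) x
            + Φ x t * deriv (deriv (fun z => Γ z t)) x) := by
      rw [e5]
      exact (((hfd' t x).hasDerivAt.mul (hgd t x).hasDerivAt).add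
        ((hfd t x).hasDerivAt.mul (hgd' t x).hasDerivAt)).deriv
    rw [t1, e4, t2, t3]
    have hμ' : μ ≠ 0 := hμ.ne'
    have hσ' : σ ≠ 0 := hσ.ne'
    have h1 : deriv (fun τ => Φ x τ) t
        = -(σ ^ 2 / 2 * deriv (fun y => deriv (fun z => Φ z t) y) x)
          - V x t * Φ x t / (μ * σ ^ 2) := by
      have hP := hΦ x t
      field_simp
      ring_nf
      ring_nf at hP
      linarith
    have h2 : deriv (fun τ => Γ x τ) t
        = σ ^ 2 / 2 * deriv (fun y => deriv (fun z => Γ z t) y) x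
          + V x t * Γ x t / (μ * σ ^ 2) := by
      have hG := hΓ x t
      field_simp
      ring_nf
      ring_nf at hG
      linarith
    have h3 : 1 / μ * (-(μ * σ ^ 2) * (deriv (fun z => Γ z t) x * deriv (fun z => Φ z t) x
          + Γ x t * deriv (deriv fun z => Φ z t) x))
        = -(σ ^ 2 * (deriv (fun z => Γ z t) x * deriv (fun z => Φ z t) x
          + Γ x t * deriv (deriv fun z => Φ z t) x)) := by
      field_simp
    rw [h3]
    linear_combination Γ x t * h1 + Φ x t * h2
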